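/- Let R be a semiartinian von Neumann regular ring with primitive factors artinian. Then the class of weakly R-projective right R-modules is closed under submodules. -/

import Mathlib

universe u

open Submodule

/-- The socle of a module: the supremum of all simple submodules. -/
noncomputable def socle (R : Type u) [Ring R] (M : Type u) [AddCommGroup M] [Module R M] :
    Submodule R M :=
  sSup {S : Submodule R M | IsAtom S}

/-- The Loewy (socle) sequence of a module, defined by transfinite recursion:
`loewy R M 0 = ⊥`, `loewy R M (α+1) / loewy R M α = Soc (M ⧸ loewy R M α)`, and unions
at limit ordinals. -/
noncomputable def loewy (R : Type u) [Ring R] (M : Type u) [AddCommGroup M] [Module R M]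
    (o : Ordinal.{u}) : Submodule R M :=
  o.limitRecOn ⊥ (fun _ N => (socle R (M ⧸ N)).comap N.mkQ)
    (fun o _ IH => ⨆ (b : Ordinal) (h : b < o), IH b h)

/-- The Loewy length of a module: the least ordinal `o` with `loewy R M o = ⊤`. -/
noncomputable def loewyLength (R : Type u) [Ring R] (M : Type u) [AddCommGroup M]
    [Module R M] : Ordinal.{u} :=
  sInf {o : Ordinal | loewy R M o = ⊤}

/-- A ring is semiartinian if every nonzero module has a nonzero socle. -/
def IsSemiartinianRing (R : Type u) [Ring R] : Prop :=
  ∀ (M : Type u) [AddCommGroup M] [Module R M], Nontrivial M → socle R M ≠ ⊥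

/-- A ring is von Neumann regular if for every `r` there is `s` with `r * s * r = r`. -/
def IsVonNeumannRegularRing (R : Type u) [Ring R] : Prop :=
  ∀ r : R, ∃ s : R, r * s * r = r

/-- `R` has primitive factors artinian: for every primitive ideal `P` (= annihilator of a
simple module), the factor `R/P` is artinian. -/
def HasPrimitiveFactorsArtinian (R : Type u) [Ring R] : Prop :=
  ∀ (M : Type u) [AddCommGroup M] [Module R M], IsSimpleModule R M →
    IsArtinian R (R ⧸ (Module.annihilator R M : Submodule R R))

/-- The `α`-th layer of the Loewy sequence of `R`, as a submodule of `R ⧸ loewy R R α`. -/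
noncomputable def loewyLayer (R : Type u) [Ring R] (α : Ordinal.{u}) :
    Submodule R (R ⧸ loewy R R α) :=
  (loewy R R (α + 1)).map (loewy R R α).mkQ

/-- The canonical projection `π_α : S_{α+1} → S_{α+1}/S_α`. -/
noncomputable def layerProj (R : Type u) [Ring R] (α : Ordinal.{u}) :
    (loewy R R (α + 1) : Submodule R R) →ₗ[R] (loewyLayer R α) :=
  LinearMap.codRestrict _ ((loewy R R α).mkQ.comp (loewy R R (α + 1)).subtype)
    (fun x => ⟨(x : R), x.2, rfl⟩)

/-- `M` is weakly `R`-projective: every homomorphism from `M` to a layer `S_{α+1}/S_α`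
(`0 < α`) with finitely generated image factors through `π_α : S_{α+1} → S_{α+1}/S_α`. -/
def IsWeaklyRProjective (R : Type u) [Ring R] (M : Type u) [AddCommGroup M]
    [Module R M] : Prop :=
  ∀ α : Ordinal.{u}, 0 < α →
    ∀ φ : M →ₗ[R] (loewyLayer R α), (LinearMap.range φ).FG →
      ∃ ψ : M →ₗ[R] (loewy R R (α + 1) : Submodule R R), (layerProj R α).comp ψ = φ

/-- `M` is layer projective: for each `0 < α`, every simple submodule of the `α`-th layer of
`M` is isomorphic to a simple (direct summand) submodule of the `α`-th layer of `R`, i.e. the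
`α`-th layer of `M` is a projective `R/S_α`-module. -/
def IsLayerProjective (R : Type u) [Ring R] (M : Type u) [AddCommGroup M]
    [Module R M] : Prop :=
  ∀ α : Ordinal.{u}, 0 < α →
    ∀ T : Submodule R ((loewy R M (α + 1)).map (loewy R M α).mkQ), IsAtom T →
      ∃ T' : Submodule R (loewyLayer R α), IsAtom T' ∧ Nonempty (T ≃ₗ[R] T')

/-- The submodule `M·S` of `M`, generated by all products `s • m` with `s ∈ S`. -/
def smulSub (R : Type u) [Ring R] (M : Type u) [AddCommGroup M] [Module R M]
    (S : Submodule R R) : Submodule R M :=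
  Submodule.span R {x : M | ∃ s ∈ S, ∃ m : M, s • m = x}

/-!
A finitely generated submodule of the layer `S_{α+1}/S_α = Soc (R/S_α)` lies in a finite sum `B`
of simple modules `T`. Then `R/ann B` embeds in the product of the artinian modules `R/ann T`, so it
is an artinian von Neumann regular ring, hence semisimple. By regularity every map from an
ideal `I` into `B` kills `I ∩ ann B`, so it factors through the image of `I` in the semisimple
module `R/ann B` and extends to `R`: `B` is injective by Baer's criterion. A map `N → S_{α+1}/S_α`
with finitely generated image thus extends to `M → B`, whose image is finitely generated because
`B` has finite length; weak `R`-projectivity of `M` lifts it through `π_α`, and restricting the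
lift to `N` finishes the proof.
-/

namespace IsVonNeumannRegularRing

variable {R : Type u} [Ring R]

theorem ringJacobson_eq_bot (hR : IsVonNeumannRegularRing R) : Ring.jacobson R = ⊥ := by
  refine eq_bot_iff.mpr fun x hx => ?_
  obtain ⟨s, hs⟩ := hR x
  rw [← Ideal.jacobson_bot] at hx
  obtain ⟨z, hz⟩ := Ideal.mem_jacobson_iff.mp hx (-s)
  rw [Ideal.mem_bot] at hz
  have hz' : z * (1 - s * x) = 1 := by
    calc z * (1 - s * x) = z * -s * x + z - 1 + 1 := by noncomm_ring
      _ = 1 := by rw [hz, zero_add]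
  have hsx : s * x = 0 := by
    calc s * x = z * (1 - s * x) * (s * x) := by rw [hz', one_mul]
      _ = z * (s * x - s * (x * s * x)) := by noncomm_ring
      _ = 0 := by rw [hs, sub_self, mul_zero]
  rw [Submodule.mem_bot, ← hs, mul_assoc, hsx, mul_zero]

theorem quotient (hR : IsVonNeumannRegularRing R) (P : Ideal R) [P.IsTwoSided] :
    IsVonNeumannRegularRing (R ⧸ P) := by
  intro r
  obtain ⟨r, rfl⟩ := Ideal.Quotient.mk_surjective r
  obtain ⟨s, hs⟩ := hR r
  exact ⟨Ideal.Quotient.mk P s, by rw [← map_mul, ← map_mul, hs]⟩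

theorem isSemisimpleModule_quotient (hR : IsVonNeumannRegularRing R) (P : Ideal R)
    [P.IsTwoSided] [IsArtinian R (R ⧸ P)] : IsSemisimpleModule R (R ⧸ P) := by
  have : IsArtinianRing (R ⧸ P) := isArtinian_of_tower R inferInstance
  have : IsSemisimpleRing (R ⧸ P) :=
    IsArtinianRing.isSemisimpleRing_iff_jacobson.mpr (hR.quotient P).ringJacobson_eq_bot
  let l : (R ⧸ P) →ₛₗ[Ideal.Quotient.mk P] (R ⧸ P) :=
    { toFun := id, map_add' := fun _ _ => rfl, map_smul' := fun _ _ => rfl }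
  exact (l.isSemisimpleModule_iff_of_bijective Function.bijective_id).mpr inferInstance

theorem baer_of_isSemisimpleModule_quotient_annihilator (hR : IsVonNeumannRegularRing R)
    (W : Type*) [AddCommGroup W] [Module R W]
    [IsSemisimpleModule R (R ⧸ Module.annihilator R W)] : Module.Baer R W := by
  intro I g
  set P := Module.annihilator R W
  set f : I →ₗ[R] R ⧸ P := P.mkQ ∘ₗ I.subtype
  have hker : LinearMap.ker f ≤ LinearMap.ker g := by
    rintro x (hx : Submodule.Quotient.mk (x : R) = 0)
    rw [Submodule.Quotient.mk_eq_zero] at hx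
    obtain ⟨y, hy⟩ := hR x
    have hxy : (x : R) * y ∈ P := Ideal.mul_mem_right y P hx
    have hxx : ((x : R) * y) • x = x := Subtype.ext hy
    rw [LinearMap.mem_ker, ← hxx, map_smul, Module.mem_annihilator.mp hxy]
  obtain ⟨h, hh⟩ := IsSemisimpleModule.extension_property ((LinearMap.ker f).liftQ f le_rfl)
    (LinearMap.ker_eq_bot.mp (Submodule.ker_liftQ_eq_bot _ _ _ le_rfl))
    ((LinearMap.ker f).liftQ g hker)
  exact ⟨h ∘ₗ P.mkQ, fun x hx => LinearMap.congr_fun hh (Submodule.Quotient.mk ⟨x, hx⟩)⟩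

end IsVonNeumannRegularRing

section

variable {R : Type u} [Ring R]

theorem isArtinian_quotient_iInf {ι M : Type*} [Finite ι] [AddCommGroup M] [Module R M]
    (p : ι → Submodule R M) [∀ i, IsArtinian R (M ⧸ p i)] : IsArtinian R (M ⧸ ⨅ i, p i) := by
  have hker : ⨅ i, p i = LinearMap.ker (LinearMap.pi fun i => (p i).mkQ) := by
    simp only [LinearMap.ker_pi, Submodule.ker_mkQ]
  exact isArtinian_of_injective _
    (LinearMap.ker_eq_bot.mp (Submodule.ker_liftQ_eq_bot' _ _ hker))

theorem isArtinian_quotient_annihilator_sSup {Q : Type*} [AddCommGroup Q] [Module R Q]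
    {s : Set (Submodule R Q)} (hs : s.Finite)
    (h : ∀ T ∈ s, IsArtinian R (R ⧸ Module.annihilator R T)) :
    IsArtinian R (R ⧸ Module.annihilator R ↥(sSup s)) := by
  have := hs.to_subtype
  have (T : s) : IsArtinian R (R ⧸ Module.annihilator R T) := h T T.2
  rw [sSup_eq_iSup', ← Submodule.annihilator, Submodule.annihilator_iSup]
  exact isArtinian_quotient_iInf _

theorem isNoetherian_sSup_of_forall_isAtom {Q : Type*} [AddCommGroup Q] [Module R Q]
    {s : Set (Submodule R Q)} (hs : s.Finite) (hatoms : ∀ T ∈ s, IsAtom T) :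
    IsNoetherian R ↥(sSup s) := by
  have := hs.to_subtype
  have (T : s) : IsSimpleModule R T := isSimpleModule_iff_isAtom.mpr (hatoms T T.2)
  rw [sSup_eq_iSup']
  exact isNoetherian_iSup

variable {Q : Type u} [AddCommGroup Q] [Module R Q]

theorem Submodule.FG.exists_finite_isAtom_le_sSup {L : Submodule R Q} (hL : L.FG)
    (hLs : L ≤ socle R Q) :
    ∃ s : Set (Submodule R Q), s.Finite ∧ (∀ T ∈ s, IsAtom T) ∧ L ≤ sSup s := by
  obtain ⟨t, hts, hLt⟩ := (CompleteLattice.isCompactElement_iff_exists_le_sSup_of_le_sSup _ _).mp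
    ((Submodule.fg_iff_compact L).mp hL) _ hLs
  exact ⟨t, t.finite_toSet, fun T hT => hts hT, hLt.trans (Finset.sup_id_eq_sSup t).le⟩

theorem baer_sSup_of_forall_isAtom (hvnr : IsVonNeumannRegularRing R)
    (hpfa : HasPrimitiveFactorsArtinian R) {s : Set (Submodule R Q)} (hs : s.Finite)
    (hatoms : ∀ T ∈ s, IsAtom T) : Module.Baer R ↥(sSup s) := by
  have := isArtinian_quotient_annihilator_sSup hs fun T hT =>
    hpfa T (isSimpleModule_iff_isAtom.mpr (hatoms T hT))
  have := hvnr.isSemisimpleModule_quotient (Module.annihilator R ↥(sSup s))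
  exact hvnr.baer_of_isSemisimpleModule_quotient_annihilator _

theorem exists_baer_isNoetherian_le_socle (hvnr : IsVonNeumannRegularRing R)
    (hpfa : HasPrimitiveFactorsArtinian R) {L : Submodule R Q} (hL : L.FG)
    (hLs : L ≤ socle R Q) :
    ∃ B : Submodule R Q, L ≤ B ∧ B ≤ socle R Q ∧ Module.Baer R B ∧ IsNoetherian R B := by
  obtain ⟨s, hs, hatoms, hLs⟩ := hL.exists_finite_isAtom_le_sSup hLs
  exact ⟨sSup s, hLs, sSup_le_sSup hatoms, baer_sSup_of_forall_isAtom hvnr hpfa hs hatoms,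
    isNoetherian_sSup_of_forall_isAtom hs hatoms⟩

end

theorem loewy_succ (R : Type u) [Ring R] (M : Type u) [AddCommGroup M] [Module R M]
    (o : Ordinal.{u}) :
    loewy R M (o + 1) = (socle R (M ⧸ loewy R M o)).comap (loewy R M o).mkQ := by
  rw [loewy, Ordinal.limitRecOn_add_one]
  rfl

theorem loewyLayer_eq_socle (R : Type u) [Ring R] (α : Ordinal.{u}) :
    loewyLayer R α = socle R (R ⧸ loewy R R α) := by
  rw [loewyLayer, loewy_succ, Submodule.map_comap_eq_of_surjective (loewy R R α).mkQ_surjective]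

theorem isWeaklyRProjective_submodule_general
    (R : Type u) [Ring R]
    (hvnr : IsVonNeumannRegularRing R) (hpfa : HasPrimitiveFactorsArtinian R)
    (M : Type u) [AddCommGroup M] [Module R M]
    (hM : IsWeaklyRProjective R M) (N : Submodule R M) :
    IsWeaklyRProjective R N := by
  intro α hα φ hφ
  set φQ : N →ₗ[R] R ⧸ loewy R R α := (loewyLayer R α).subtype ∘ₗ φ
  have hφQ : LinearMap.range φQ ≤ socle R (R ⧸ loewy R R α) := by
    rintro _ ⟨n, rfl⟩
    exact loewyLayer_eq_socle R α ▸ (φ n).2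
  have hfg : (LinearMap.range φQ).FG := by
    rw [LinearMap.range_comp]
    exact hφ.map _
  obtain ⟨B, hφB, hBs, hBaer, hBnoeth⟩ := exists_baer_isNoetherian_le_socle hvnr hpfa hfg hφQ
  obtain ⟨Φ, hΦ⟩ := hBaer.extension_property N.subtype N.injective_subtype
    (LinearMap.codRestrict B φQ fun n => hφB ⟨n, rfl⟩)
  set ι := Submodule.inclusion (hBs.trans (loewyLayer_eq_socle R α).ge)
  have hΦfg : (LinearMap.range (ι ∘ₗ Φ)).FG := by
    rw [LinearMap.range_comp]
    exact (hBnoeth.noetherian _).map _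
  obtain ⟨ψ, hψ⟩ := hM α hα (ι ∘ₗ Φ) hΦfg
  refine ⟨ψ ∘ₗ N.subtype, ?_⟩
  rw [← LinearMap.comp_assoc, hψ, LinearMap.comp_assoc, hΦ]
  rfl

/-- Over a semiartinian von Neumann regular ring with primitive factors artinian, the class of
weakly `R`-projective modules is closed under submodules. -/
theorem isWeaklyRProjective_submodule
    (R : Type u) [Ring R] (hsa : IsSemiartinianRing R)
    (hvnr : IsVonNeumannRegularRing R) (hpfa : HasPrimitiveFactorsArtinian R)
    (M : Type u) [AddCommGroup M] [Module R M]
    (hM : IsWeaklyRProjective R M) (N : Submodule R M) :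
    IsWeaklyRProjective R N :=
  isWeaklyRProjective_submodule_general R hvnr hpfa M hM N
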